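/- arXiv:2404.12304 — 4 statements merged into one kernel-verified Lean document; each statement's English description precedes it below -/
import Mathlib

section
/- For a ∈ (-1/2, 1/2), the function z(s) = √(1/2 + a·cos 2s) satisfies the ODE z'' + (z'² - 1)/z + 2z = 0 on ℝ. -/
/-! Put `u = 1/2 + a cos 2s = z²`. Differentiating `z z' = u' / 2` gives
`z z'' + z'² = u'' / 2 = -2a cos 2s = 1 - 2z²`, which is the equation multiplied by `z > 0`. -/

open Real MeasureTheory intervalIntegral

noncomputable def psi (a t : ℝ) : ℝ :=
  Real.sqrt (1/4 - a^2) /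
    (Real.sqrt (1/2 + a * Real.cos (2*t)) * (1/2 - a * Real.cos (2*t)))

noncomputable def phi (a phi0 s : ℝ) : ℝ := phi0 + ∫ t in (0:ℝ)..s, psi a t

noncomputable def Ca (a : ℝ) : ℝ := ∫ t in (0:ℝ)..Real.pi, psi a t

noncomputable def xa (a phi0 s : ℝ) : ℝ :=
  Real.sqrt (1/2 - a * Real.cos (2*s)) * Real.cos (phi a phi0 s)

noncomputable def ya (a phi0 s : ℝ) : ℝ :=
  Real.sqrt (1/2 - a * Real.cos (2*s)) * Real.sin (phi a phi0 s)

noncomputable def za (a s : ℝ) : ℝ := Real.sqrt (1/2 + a * Real.cos (2*s))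

noncomputable def fa (a phi0 s : ℝ) : ℝ :=
  a * Real.sin (2*s) * Real.sin (phi a phi0 s) +
    Real.sqrt (1/4 - a^2) * Real.sqrt (1/2 + a * Real.cos (2*s)) * Real.cos (phi a phi0 s)

theorem sqrt_mul_deriv_deriv_add_deriv_sq {u : ℝ → ℝ} (hu : Differentiable ℝ u)
    (hpos : ∀ t, 0 < u t) {s : ℝ} (hu' : DifferentiableAt ℝ (deriv u) s) :
    √(u s) * deriv (deriv fun t => √(u t)) s + deriv (fun t => √(u t)) s ^ 2 =
      deriv (deriv u) s / 2 := by
  have hz : ∀ t, HasDerivAt (fun t => √(u t)) (deriv u t / (2 * √(u t))) t := fun t =>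
    (hu t).hasDerivAt.sqrt (hpos t).ne'
  have hz' : deriv (fun t => √(u t)) = fun t => deriv u t / (2 * √(u t)) :=
    funext fun t => (hz t).deriv
  have hz'_diff : DifferentiableAt ℝ (deriv fun t => √(u t)) s := by
    rw [hz']
    exact hu'.div (((hu s).sqrt (hpos s).ne').const_mul 2)
      (mul_ne_zero two_ne_zero (sqrt_pos.2 (hpos s)).ne')
  have hprod : (fun t => √(u t) * deriv (fun t => √(u t)) t) = fun t => deriv u t / 2 := by
    funext t
    rw [hz']
    field_simp [(sqrt_pos.2 (hpos t)).ne']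
  have hprod_deriv := (hz s).fun_mul hz'_diff.hasDerivAt
  rw [hprod] at hprod_deriv
  rw [(hu'.hasDerivAt.div_const 2).unique hprod_deriv, (hz s).deriv]
  ring

theorem one_half_add_mul_cos_pos {a : ℝ} (ha : |a| < 1 / 2) (x : ℝ) : 0 < 1 / 2 + a * cos x := by
  have : |a * cos x| ≤ |a| := by
    rw [abs_mul]
    exact mul_le_of_le_one_right (abs_nonneg a) (abs_cos_le_one x)
  linarith [neg_abs_le (a * cos x)]

theorem deriv_one_half_add_mul_cos_two_mul (a : ℝ) :
    deriv (fun t => 1 / 2 + a * cos (2 * t)) = fun t => -(2 * a * sin (2 * t)) := by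
  funext t
  have h := (((hasDerivAt_id' t).const_mul 2).cos.const_mul a).const_add (1 / 2)
  exact h.deriv.trans (by ring)

theorem deriv_deriv_one_half_add_mul_cos_two_mul (a t : ℝ) :
    deriv (deriv fun t => 1 / 2 + a * cos (2 * t)) t = -(4 * (a * cos (2 * t))) := by
  have h := (((hasDerivAt_id' t).const_mul 2).sin.const_mul (2 * a)).fun_neg
  rw [deriv_one_half_add_mul_cos_two_mul]
  exact h.deriv.trans (by ring)

theorem stmt13 (a : ℝ) (ha : a ∈ Set.Ioo (-(1/2) : ℝ) (1/2)) (s : ℝ) :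
    deriv (deriv (za a)) s + ((deriv (za a) s)^2 - 1) / za a s + 2 * za a s = 0 := by
  have hpos (t : ℝ) : 0 < 1 / 2 + a * cos (2 * t) := one_half_add_mul_cos_pos (abs_lt.2 ha) _
  have hdiff : Differentiable ℝ fun t => 1 / 2 + a * cos (2 * t) := by fun_prop
  have hdiff' : DifferentiableAt ℝ (deriv fun t => 1 / 2 + a * cos (2 * t)) s := by
    rw [deriv_one_half_add_mul_cos_two_mul]
    fun_prop
  have hz_ode : za a s * deriv (deriv (za a)) s + deriv (za a) s ^ 2 = -(2 * (a * cos (2 * s))) :=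
    (sqrt_mul_deriv_deriv_add_deriv_sq hdiff hpos hdiff').trans
      (by rw [deriv_deriv_one_half_add_mul_cos_two_mul]; ring)
  have hz_sq : za a s ^ 2 = 1 / 2 + a * cos (2 * s) := sq_sqrt (hpos s).le
  have hz_ne : za a s ≠ 0 := (sqrt_pos.2 (hpos s)).ne'
  field_simp
  linear_combination hz_ode + 2 * hz_sq
end

section
/- For a ∈ (-1/2, 1/2), the curve γ_a is parametrized by arc length: x_a'(s)² + y_a'(s)² + z_a'(s)² = 1 for all s ∈ ℝ. -/
open Real MeasureTheory intervalIntegral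

/-!
Writing `x + i y = √r · e^{iφ}` with `r = 1/2 - a cos 2s` and `z = √w` with `w = 1/2 + a cos 2s`,
the squared speed is `(√r)'² + r φ'² + (√w)'²`. Since `r + w = 1` we have `r' = -w' = 2a sin 2s`,
so the two radial terms add up to `a² sin² 2s / (r w)`, while `r ψ² = (1/4 - a²) / (r w)`.
Their sum is `(1/4 - a² cos² 2s) / (r w) = 1`, because `r w = 1/4 - a² cos² 2s`.
-/

theorem deriv_mul_cos_sq_add_deriv_mul_sin_sq {ρ θ : ℝ → ℝ} {ρ' θ' s : ℝ}
    (hρ : HasDerivAt ρ ρ' s) (hθ : HasDerivAt θ θ' s) :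
    deriv (fun t => ρ t * cos (θ t)) s ^ 2 + deriv (fun t => ρ t * sin (θ t)) s ^ 2 =
      ρ' ^ 2 + (ρ s * θ') ^ 2 := by
  have hx : HasDerivAt (fun t => ρ t * cos (θ t)) _ s := hρ.mul hθ.cos
  have hy : HasDerivAt (fun t => ρ t * sin (θ t)) _ s := hρ.mul hθ.sin
  rw [hx.deriv, hy.deriv]
  linear_combination (ρ' ^ 2 + (ρ s * θ') ^ 2) * sin_sq_add_cos_sq (θ s)

theorem hasDerivAt_mul_cos_two_mul (a s : ℝ) :
    HasDerivAt (fun t => a * cos (2 * t)) (-(2 * a * sin (2 * s))) s :=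
  (((hasDerivAt_id' s).const_mul 2).cos.const_mul a).congr_deriv (by ring)

section

variable {a : ℝ} (ha : a ∈ Set.Ioo (-(1/2) : ℝ) (1/2))
include ha

theorem abs_mul_cos_two_mul_lt (t : ℝ) : |a * cos (2 * t)| < 1/2 :=
  calc |a * cos (2 * t)| = |a| * |cos (2 * t)| := abs_mul _ _
    _ ≤ |a| := mul_le_of_le_one_right (abs_nonneg a) (abs_cos_le_one _)
    _ < 1/2 := abs_lt.2 ha

theorem half_add_mul_cos_two_mul_pos (t : ℝ) : 0 < 1/2 + a * cos (2 * t) := by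
  linarith [(abs_lt.1 (abs_mul_cos_two_mul_lt ha t)).1]

theorem half_sub_mul_cos_two_mul_pos (t : ℝ) : 0 < 1/2 - a * cos (2 * t) := by
  linarith [(abs_lt.1 (abs_mul_cos_two_mul_lt ha t)).2]

theorem continuous_psi : Continuous (psi a) := by
  refine continuous_const.div (by fun_prop) fun t => ?_
  have := half_add_mul_cos_two_mul_pos ha t
  have := half_sub_mul_cos_two_mul_pos ha t
  positivity

theorem hasDerivAt_phi (phi0 s : ℝ) : HasDerivAt (phi a phi0) (psi a s) s :=
  ((continuous_psi ha).integral_hasStrictDerivAt 0 s).hasDerivAt.const_add phi0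

theorem speed_sq_eq_one (s : ℝ) :
    (2 * a * sin (2 * s) / (2 * √(1/2 - a * cos (2 * s)))) ^ 2
      + (√(1/2 - a * cos (2 * s)) * psi a s) ^ 2
      + (-(2 * a * sin (2 * s)) / (2 * √(1/2 + a * cos (2 * s)))) ^ 2 = 1 := by
  have hr := half_sub_mul_cos_two_mul_pos ha s
  have hw := half_add_mul_cos_two_mul_pos ha s
  have hb : 0 ≤ 1/4 - a ^ 2 := by nlinarith [ha.1, ha.2]
  have hsum : (1/2 - a * cos (2 * s)) + (1/2 + a * cos (2 * s)) = 1 := by ring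
  have hprod : (1/2 - a * cos (2 * s)) * (1/2 + a * cos (2 * s)) =
      1/4 - a ^ 2 * cos (2 * s) ^ 2 := by ring
  simp only [psi, div_pow, mul_pow, sq_sqrt hr.le, sq_sqrt hw.le, sq_sqrt hb]
  generalize 1/2 - a * cos (2 * s) = r at *
  generalize 1/2 + a * cos (2 * s) = w at *
  field_simp
  linear_combination 4 * a ^ 2 * sin (2 * s) ^ 2 * hsum - 4 * hprod
    + 4 * a ^ 2 * sin_sq_add_cos_sq (2 * s)

end

theorem stmt14 (a : ℝ) (ha : a ∈ Set.Ioo (-(1/2) : ℝ) (1/2)) (phi0 : ℝ) (s : ℝ) :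
    (deriv (xa a phi0) s)^2 + (deriv (ya a phi0) s)^2 + (deriv (za a) s)^2 = 1 := by
  have hρ := ((hasDerivAt_mul_cos_two_mul a s).const_sub (1/2)).sqrt
    (half_sub_mul_cos_two_mul_pos ha s).ne'
  have hz := ((hasDerivAt_mul_cos_two_mul a s).const_add (1/2)).sqrt
    (half_add_mul_cos_two_mul_pos ha s).ne'
  have hpolar := deriv_mul_cos_sq_add_deriv_mul_sin_sq hρ (hasDerivAt_phi ha phi0 s)
  rw [show deriv (xa a phi0) s ^ 2 + deriv (ya a phi0) s ^ 2 = _ from hpolar,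
    show deriv (za a) s = _ from hz.deriv, neg_neg]
  exact speed_sq_eq_one ha s
end

section
/- For any β ∈ (0, 2π), the set of k ∈ ℕ with cos(kβ) > 0 is infinite, and the set of k ∈ ℕ with cos(kβ) < 0 is infinite. -/
/-! The partial sums of `cos (k β)` are the real parts of the geometric sums of `e^{iβ}`, hence
bounded by `1 / sin (β / 2)`. If `cos (k β)` eventually had one sign, bounded partial sums would
make the series summable, so `cos (k β) → 0`; this contradicts `cos (2 k β) = 2 cos² (k β) - 1`. -/

open Filter Finset Real Topology

lemma tendsto_atTop_zero_of_sum_range_le_of_eventually_nonneg {u : ℕ → ℝ} {C : ℝ}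
    (hS : ∀ n, ∑ k ∈ range n, u k ≤ C) (hu : ∀ᶠ k in atTop, 0 ≤ u k) :
    Tendsto u atTop (𝓝 0) := by
  obtain ⟨N, hN⟩ := eventually_atTop.1 hu
  have hsum : Summable fun k => u (N + k) := by
    refine summable_of_sum_range_le (c := C - ∑ k ∈ range N, u k)
      (fun k => hN _ (Nat.le_add_right N k)) fun n => ?_
    have := hS (N + n)
    rw [sum_range_add] at this
    linarith
  rw [← tendsto_add_atTop_iff_nat N]
  simpa only [add_comm] using hsum.tendsto_atTop_zero

lemma infinite_setOf_pos_of_abs_sum_range_le {u : ℕ → ℝ} {C : ℝ}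
    (hS : ∀ n, |∑ k ∈ range n, u k| ≤ C) (hu : ¬Tendsto u atTop (𝓝 0)) :
    {k | 0 < u k}.Infinite := by
  rw [← Nat.frequently_atTop_iff_infinite]
  intro h
  simp only [not_lt] at h
  have hneg : Tendsto (-u) atTop (𝓝 0) :=
    tendsto_atTop_zero_of_sum_range_le_of_eventually_nonneg
      (fun n => by simpa [sum_neg_distrib] using (neg_le_abs _).trans (hS n))
      (h.mono fun _ => neg_nonneg.2)
  exact hu (by simpa using hneg.neg)

lemma abs_sin_half_mul_abs_sum_range_cos_le_one (β : ℝ) (n : ℕ) :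
    |sin (β / 2)| * |∑ k ∈ range n, cos (k * β)| ≤ 1 := by
  set z : ℂ := Complex.exp (Complex.I * β)
  have hz : ‖z‖ = 1 := Complex.norm_exp_I_mul_ofReal β
  have hre : ∑ k ∈ range n, cos (k * β) = (∑ k ∈ range n, z ^ k).re := by
    rw [Complex.re_sum]
    refine sum_congr rfl fun k _ => ?_
    rw [← Complex.exp_nat_mul, show (k : ℂ) * (Complex.I * β) = ((k * β : ℝ) : ℂ) * Complex.I by
      push_cast; ring, Complex.exp_ofReal_mul_I_re]
  calc |sin (β / 2)| * |∑ k ∈ range n, cos (k * β)|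
      ≤ ‖z - 1‖ / 2 * ‖∑ k ∈ range n, z ^ k‖ := by
        rw [Complex.norm_exp_I_mul_ofReal_sub_one, norm_mul, Real.norm_eq_abs, hre]
        gcongr
        · norm_num
        · exact Complex.abs_re_le_norm _
    _ = ‖z ^ n - 1‖ / 2 := by rw [← geom_sum_mul, norm_mul]; ring
    _ ≤ (‖z ^ n‖ + ‖(1 : ℂ)‖) / 2 := by gcongr; exact norm_sub_le _ _
    _ = 1 := by rw [norm_pow, hz]; norm_num

lemma not_tendsto_cos_nat_mul_atTop_zero (β : ℝ) :
    ¬Tendsto (fun k : ℕ => cos (k * β)) atTop (𝓝 0) := by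
  intro h
  have hdouble : Tendsto (fun k : ℕ => cos ((2 * k : ℕ) * β)) atTop (𝓝 0) :=
    h.comp (tendsto_id.nsmul_atTop two_pos)
  have hsq : Tendsto (fun k : ℕ => 2 * cos (k * β) ^ 2 - 1) atTop (𝓝 (-1)) := by
    simpa using ((h.pow 2).const_mul 2).sub_const 1
  have hcos2 : (fun k : ℕ => cos ((2 * k : ℕ) * β)) = fun k : ℕ => 2 * cos (k * β) ^ 2 - 1 := by
    funext k
    rw [Nat.cast_mul, Nat.cast_ofNat, mul_assoc, cos_two_mul]
  rw [hcos2] at hdouble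
  exact absurd (tendsto_nhds_unique hdouble hsq) (by norm_num)

theorem stmt17 (β : ℝ) (hβ : β ∈ Set.Ioo (0 : ℝ) (2 * Real.pi)) :
    {k : ℕ | 0 < Real.cos (k * β)}.Infinite ∧
    {k : ℕ | Real.cos (k * β) < 0}.Infinite := by
  have hsin : 0 < sin (β / 2) := sin_pos_of_pos_of_lt_pi (by linarith [hβ.1]) (by linarith [hβ.2])
  have hS : ∀ n, |∑ k ∈ range n, cos (k * β)| ≤ 1 / sin (β / 2) := fun n => by
    rw [le_div_iff₀ hsin, mul_comm, ← abs_of_pos hsin]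
    exact abs_sin_half_mul_abs_sum_range_cos_le_one β n
  have hcos := not_tendsto_cos_nat_mul_atTop_zero β
  refine ⟨infinite_setOf_pos_of_abs_sum_range_le hS hcos, ?_⟩
  have := infinite_setOf_pos_of_abs_sum_range_le (u := fun k : ℕ => -cos (k * β))
    (by simpa [sum_neg_distrib] using hS) fun h => hcos (by simpa using h.neg)
  simpa only [neg_pos] using this
end

section
/- With φ₀ = 0, for each a ∈ (-1/2, 1/2) the function f_a has at least countably many positive zeros: the set {s > 0 : f_a(s) = 0} is infinite. Consequently there is a strictly increasing sequence s₁ < s₂ < ... of positive zeros of f_a. -/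
open Real MeasureTheory intervalIntegral

/-- cos (n * π) = (-1)^n -/
lemma cos_nat_mul_pi' (n : ℕ) : Real.cos (n * Real.pi) = (-1)^n := by
  have := Real.cos_nat_mul_pi_sub 0 n
  simpa using this

/-- If a continuous function changes sign on an interval, it has a zero strictly inside. -/
lemma zero_of_sign_change {f : ℝ → ℝ} (hf : Continuous f) {p q : ℝ} (hpq : p < q)
    (h : f p * f q < 0) : ∃ z, p < z ∧ z < q ∧ f z = 0 := by
  rcases lt_trichotomy (f p) 0 with hp | hp | hp
  · have hq : 0 < f q := by nlinarith
    have hmem : (0:ℝ) ∈ Set.Icc (f p) (f q) := ⟨hp.le, hq.le⟩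
    obtain ⟨z, hz, hz0⟩ := intermediate_value_Icc hpq.le hf.continuousOn hmem
    refine ⟨z, lt_of_le_of_ne hz.1 ?_, lt_of_le_of_ne hz.2 ?_, hz0⟩
    · rintro rfl; rw [hz0] at hp; exact lt_irrefl 0 hp
    · rintro rfl; rw [hz0] at hq; exact lt_irrefl 0 hq
  · rw [hp] at h; simp at h
  · have hq : f q < 0 := by nlinarith
    have hmem : (0:ℝ) ∈ Set.Icc (f q) (f p) := ⟨hq.le, hp.le⟩
    obtain ⟨z, hz, hz0⟩ := intermediate_value_Icc' hpq.le hf.continuousOn hmem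
    refine ⟨z, lt_of_le_of_ne hz.1 ?_, lt_of_le_of_ne hz.2 ?_, hz0⟩
    · rintro rfl; rw [hz0] at hp; exact lt_irrefl 0 hp
    · rintro rfl; rw [hz0] at hq; exact lt_irrefl 0 hq

theorem stmt18 (a : ℝ) (ha : a ∈ Set.Ioo (-(1/2) : ℝ) (1/2)) :
    {s : ℝ | 0 < s ∧ fa a 0 s = 0}.Infinite ∧
    ∃ u : ℕ → ℝ, StrictMono u ∧ ∀ n, 0 < u n ∧ fa a 0 (u n) = 0 := by
  obtain ⟨ha1, ha2⟩ := ha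
  set c := Real.sqrt (1/4 - a^2) with hc
  have hc0 : 0 < c := Real.sqrt_pos.2 (by nlinarith)
  have habs : |a| < 1/2 := abs_lt.2 ⟨by linarith, ha2⟩
  have hkey : ∀ t : ℝ, |a * Real.cos (2*t)| < 1/2 := by
    intro t
    rw [abs_mul]
    calc |a| * |Real.cos (2*t)| ≤ |a| * 1 :=
          mul_le_mul_of_nonneg_left (Real.abs_cos_le_one (2*t)) (abs_nonneg a)
      _ = |a| := mul_one _
      _ < 1/2 := habs
  have hden1 : ∀ t : ℝ, 0 < 1/2 + a * Real.cos (2*t) := by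
    intro t
    have h := neg_abs_le (a * Real.cos (2*t))
    have h2 := hkey t
    linarith
  have hden2 : ∀ t : ℝ, 0 < 1/2 - a * Real.cos (2*t) := by
    intro t
    have h := le_abs_self (a * Real.cos (2*t))
    have h2 := hkey t
    linarith
  have hDpos : ∀ t : ℝ, 0 < Real.sqrt (1/2 + a * Real.cos (2*t)) * (1/2 - a * Real.cos (2*t)) :=
    fun t => mul_pos (Real.sqrt_pos.2 (hden1 t)) (hden2 t)
  have hpsi_cont : Continuous (psi a) := by
    unfold psi
    apply Continuous.div continuous_const
    · exact (Real.continuous_sqrt.comp (by continuity)).mul (by continuity)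
    · exact fun t => (hDpos t).ne'
  have hpsi_pos : ∀ t, 0 < psi a t := fun t => div_pos hc0 (hDpos t)
  have hpsi_lb : ∀ t, c ≤ psi a t := by
    intro t
    have h1 := Real.neg_one_le_cos (2*t)
    have h2 := Real.cos_le_one (2*t)
    have h3 := le_abs_self (a * Real.cos (2*t))
    have h4 := neg_abs_le (a * Real.cos (2*t))
    have h5 := hkey t
    have hle1 : Real.sqrt (1/2 + a * Real.cos (2*t)) ≤ 1 :=
      Real.sqrt_le_one.mpr (by linarith)
    have hle2 : 1/2 - a * Real.cos (2*t) ≤ 1 := by linarith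
    have hD : Real.sqrt (1/2 + a * Real.cos (2*t)) * (1/2 - a * Real.cos (2*t)) ≤ 1 := by
      calc Real.sqrt (1/2 + a * Real.cos (2*t)) * (1/2 - a * Real.cos (2*t))
          ≤ 1 * 1 := mul_le_mul hle1 hle2 (hden2 t).le zero_le_one
        _ = 1 := one_mul 1
    rw [psi, le_div_iff₀ (hDpos t)]
    nlinarith [hDpos t]
  -- The primitive F
  set F : ℝ → ℝ := fun s => ∫ t in (0:ℝ)..s, psi a t with hF
  have hderiv : ∀ s, HasDerivAt F (psi a s) s := fun s =>
    (hpsi_cont.integral_hasStrictDerivAt 0 s).hasDerivAt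
  have hFcont : Continuous F :=
    continuous_iff_continuousAt.2 fun s => (hderiv s).continuousAt
  have hFmono : StrictMono F :=
    strictMono_of_deriv_pos fun s => by rw [(hderiv s).deriv]; exact hpsi_pos s
  have hF0 : F 0 = 0 := intervalIntegral.integral_same
  have hFlb : ∀ s : ℝ, 0 ≤ s → c * s ≤ F s := by
    intro s hs
    have h : (∫ t in (0:ℝ)..s, c) ≤ ∫ t in (0:ℝ)..s, psi a t :=
      intervalIntegral.integral_mono_on hs intervalIntegrable_const
        (hpsi_cont.intervalIntegrable 0 s) fun x _ => hpsi_lb x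
    simpa [mul_comm] using h
  -- phi in terms of F
  have hphiF : ∀ s, phi a 0 s = F s := fun s => by simp [phi, hF]
  have hphicont : Continuous (phi a 0) := by
    simpa [funext hphiF] using hFcont
  -- points where F = n * π
  have hsk : ∀ n : ℕ, ∃ s, 0 ≤ s ∧ F s = n * π := by
    intro n
    have hS : (0:ℝ) ≤ (n * π) / c := div_nonneg (by positivity) hc0.le
    have hFS : (n:ℝ) * π ≤ F ((n * π) / c) := by
      have h := hFlb _ hS
      rwa [mul_div_cancel₀ _ hc0.ne'] at h
    have hmem : (n:ℝ) * π ∈ Set.Icc (F 0) (F ((n * π) / c)) := by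
      constructor
      · rw [hF0]; positivity
      · exact hFS
    obtain ⟨s, hs, hFs⟩ := intermediate_value_Icc hS hFcont.continuousOn hmem
    exact ⟨s, hs.1, hFs⟩
  set sk : ℕ → ℝ := fun n => (hsk n).choose with hskdef
  have hsk0 : ∀ n, 0 ≤ sk n := fun n => (hsk n).choose_spec.1
  have hskF : ∀ n, F (sk n) = n * π := fun n => (hsk n).choose_spec.2
  have hskmono : ∀ n, sk n < sk (n + 1) := by
    intro n
    have : F (sk n) < F (sk (n + 1)) := by
      rw [hskF, hskF]
      have : (n:ℝ) < (n:ℝ) + 1 := by linarith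
      push_cast
      nlinarith [Real.pi_pos]
    exact hFmono.lt_iff_lt.1 this
  -- continuity of fa
  have hfacont : Continuous (fa a 0) := by
    unfold fa
    fun_prop
  -- value of fa at sk n
  have hfa_sk : ∀ n, fa a 0 (sk n) =
      (-1)^n * (c * Real.sqrt (1/2 + a * Real.cos (2 * sk n))) := by
    intro n
    rw [fa, hphiF, hskF, Real.sin_nat_mul_pi, cos_nat_mul_pi']
    ring
  have hPpos : ∀ n, 0 < c * Real.sqrt (1/2 + a * Real.cos (2 * sk n)) :=
    fun n => mul_pos hc0 (Real.sqrt_pos.2 (hden1 (sk n)))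
  -- sign change between consecutive sk's
  have hz : ∀ n : ℕ, ∃ z, sk n < z ∧ z < sk (n + 1) ∧ fa a 0 z = 0 := by
    intro n
    apply zero_of_sign_change hfacont (hskmono n)
    rw [hfa_sk n, hfa_sk (n + 1)]
    have h1 : ((-1:ℝ))^n * ((-1:ℝ))^(n+1) = -1 := by
      rw [← pow_add]
      exact Odd.neg_one_pow ⟨n, by ring⟩
    have h2 := hPpos n
    have h3 := hPpos (n + 1)
    have h4 : (-1:ℝ)^n * (c * Real.sqrt (1/2 + a * Real.cos (2 * sk n))) *
        ((-1:ℝ)^(n+1) * (c * Real.sqrt (1/2 + a * Real.cos (2 * sk (n+1))))) =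
        -((c * Real.sqrt (1/2 + a * Real.cos (2 * sk n))) *
          (c * Real.sqrt (1/2 + a * Real.cos (2 * sk (n+1))))) := by
      calc (-1:ℝ)^n * (c * Real.sqrt (1/2 + a * Real.cos (2 * sk n))) *
          ((-1:ℝ)^(n+1) * (c * Real.sqrt (1/2 + a * Real.cos (2 * sk (n+1)))))
          = ((-1:ℝ)^n * (-1:ℝ)^(n+1)) * ((c * Real.sqrt (1/2 + a * Real.cos (2 * sk n))) *
            (c * Real.sqrt (1/2 + a * Real.cos (2 * sk (n+1))))) := by ring
        _ = -((c * Real.sqrt (1/2 + a * Real.cos (2 * sk n))) *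
            (c * Real.sqrt (1/2 + a * Real.cos (2 * sk (n+1))))) := by rw [h1]; ring
    rw [h4]
    have := mul_pos h2 h3
    linarith
  set u : ℕ → ℝ := fun n => (hz n).choose with hudef
  have hu1 : ∀ n, sk n < u n := fun n => (hz n).choose_spec.1
  have hu2 : ∀ n, u n < sk (n + 1) := fun n => (hz n).choose_spec.2.1
  have hu3 : ∀ n, fa a 0 (u n) = 0 := fun n => (hz n).choose_spec.2.2
  have humono : StrictMono u := by
    apply strictMono_nat_of_lt_succ
    intro n
    exact lt_trans (hu2 n) (hu1 (n + 1))
  have hupos : ∀ n, 0 < u n := fun n => lt_of_le_of_lt (hsk0 n) (hu1 n)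
  constructor
  · exact Set.infinite_of_injective_forall_mem humono.injective
      fun n => ⟨hupos n, hu3 n⟩
  · exact ⟨u, humono, fun n => ⟨hupos n, hu3 n⟩⟩
end
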